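/- arXiv:1406.4428 — 2 statements merged into one kernel-verified Lean document; each statement's English description precedes it below -/
import Mathlib

section
/- Let n ≥ 1, let φ ∈ L²(𝕋ⁿ, ℝ) with ∫_{𝕋ⁿ} φ² dθ = 1, and let f₁,…,f_{2n} ∈ L²(𝕋ⁿ, ℝ) with ∫_{𝕋ⁿ} φ f_j dθ = 0 for each j = 1,…,2n. Then ∫_{(𝕋ⁿ)^{2n+1}} C(θ₀,…,θ_{2n}) (φ²(θ₀) − 1) (φf₁)(θ₁) (φf₂)(θ₂) ⋯ (φf_{2n})(θ_{2n}) dθ₀⋯dθ_{2n} = 0. -/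
open MeasureTheory Real
open scoped Real

noncomputable section

instance : Fact (0 < 2 * π) := ⟨by positivity⟩

/-- The circle `S¹ = ℝ/2πℤ`. -/
abbrev Circle2pi := AddCircle (2 * π)

/-- The orientation cocycle `e` on the circle: `1` on strictly positively
cyclically ordered triples, `-1` otherwise. -/
def eCocycle (a b c : Circle2pi) : ℝ :=
  letI := Classical.dec (sbtw a b c)
  if sbtw a b c then 1 else -1

/-- The normalized Haar probability measure on the circle. -/
abbrev circleMeasure : Measure Circle2pi := AddCircle.haarAddCircle

/-- The `n`-torus `𝕋ⁿ`. -/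
abbrev Torus (n : ℕ) := Fin n → Circle2pi

/-- The product probability measure on the `n`-torus. -/
abbrev torusMeasure (n : ℕ) : Measure (Torus n) := Measure.pi fun _ => circleMeasure

/-- The cocycle `C` on `(𝕋ⁿ)^(2n+1)` (indices `0, …, 2n`; the `i`-th Euler class,
for `i = 0, …, n-1` (0-indexed), uses positions `2i, 2i+1, 2i+2`). -/
def Ccocycle (n : ℕ) (θ : Fin (2 * n + 1) → Torus n) : ℝ :=
  (1 / (2 * n + 1).factorial : ℝ) *
    ∑ σ : Equiv.Perm (Fin (2 * n + 1)), ((Equiv.Perm.sign σ : ℤ) : ℝ) *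
      ∏ i : Fin n,
        eCocycle (θ (σ ⟨2 * i.1, by have := i.2; omega⟩) i)
          (θ (σ ⟨2 * i.1 + 1, by have := i.2; omega⟩) i)
          (θ (σ ⟨2 * i.1 + 2, by have := i.2; omega⟩) i)

/-!
For pairwise distinct points the orientation cocycle is a coboundary:
`e(a, b, c) = s(b - a) + s(c - b) + s(a - c)`, where `s` is the sawtooth equal to `1 - t/π` on
`[0, 2π)`. Coincidences of coordinates are null, so `C` agrees almost everywhere with a
linear combination of products `∏ᵢ s(θ^i_{u i} - θ^i_{w i})`, each of which involves at most
`2n` of the `2n + 1` variables. Integrating out a free variable `θ_k`, whose weight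
(`φ² - 1` for `k = 0`, `φ f_k` otherwise) has mean zero, kills every term.
-/

section ProductMeasure

variable {α : Type*} [MeasurableSpace α] {μ : Measure α}

lemma ae_fst_ne_snd [MeasurableEq α] [NullSingletonClass μ] [SFinite μ] :
    ∀ᵐ z ∂μ.prod μ, z.1 ≠ z.2 := by
  rw [ae_iff]
  simp only [ne_eq, not_not]
  refine (Measure.measure_prod_null measurableSet_diagonal).2 (ae_of_all _ fun x => ?_)
  have : Prod.mk x ⁻¹' Set.diagonal α = {x} := by ext; simp [eq_comm]
  simp [this]

variable {β : Type*} [MeasurableSpace β] {ν : Measure β}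

lemma measurePreserving_apply_prod_apply {ι : Type*} [Fintype ι] [IsProbabilityMeasure μ]
    {X : α → β} (hX : MeasurePreserving X μ ν) {p q : ι} (hpq : p ≠ q) :
    MeasurePreserving (fun θ : ι → α => (X (θ p), X (θ q))) (Measure.pi fun _ => μ)
      (ν.prod ν) := by
  have hXp (r : ι) :
      MeasurePreserving (fun θ : ι → α => X (θ r)) (Measure.pi fun _ => μ) ν :=
    hX.comp (measurePreserving_eval _ r)
  refine ⟨(hXp p).measurable.prodMk (hXp q).measurable, ?_⟩
  have hindep := (ProbabilityTheory.iIndepFun_pi (μ := fun _ : ι => μ) (X := fun _ => X)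
    fun _ => hX.aemeasurable).indepFun hpq
  rw [(ProbabilityTheory.indepFun_iff_map_prod_eq_prod_map_map (hXp p).aemeasurable
    (hXp q).aemeasurable).1 hindep, (hXp p).map_eq, (hXp q).map_eq]

lemma ae_apply_ne_apply {ι : Type*} [Fintype ι] [IsProbabilityMeasure μ] [MeasurableEq β]
    [NullSingletonClass ν] [SFinite ν] {X : α → β} (hX : MeasurePreserving X μ ν) {p q : ι}
    (hpq : p ≠ q) : ∀ᵐ θ ∂(Measure.pi fun _ => μ), X (θ p) ≠ X (θ q) :=
  (measurePreserving_apply_prod_apply hX hpq).quasiMeasurePreserving.ae ae_fst_ne_snd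

lemma ae_injective_apply {ι κ : Type*} [Fintype ι] [Fintype κ] [MeasurableEq α]
    [IsProbabilityMeasure μ] [NullSingletonClass μ] :
    ∀ᵐ θ ∂(Measure.pi fun _ : κ => Measure.pi fun _ : ι => μ),
      ∀ i, Function.Injective fun p => θ p i := by
  refine ae_all_iff.2 fun i => ?_
  have h (p q : κ) : ∀ᵐ θ ∂(Measure.pi fun _ : κ => Measure.pi fun _ : ι => μ),
      θ p i = θ q i → p = q := by
    by_cases hpq : p = q
    · exact ae_of_all _ fun _ _ => hpq
    · filter_upwards [ae_apply_ne_apply (measurePreserving_eval _ i) hpq] with θ hθ heq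
      exact (hθ heq).elim
  filter_upwards [ae_all_iff.2 fun p => ae_all_iff.2 (h p)] with θ hθ p q
  exact hθ p q

lemma integral_mul_prod_eq_zero_of_update_eq [SigmaFinite μ] [Nonempty α] {m : ℕ}
    (F : (Fin (m + 1) → α) → ℝ) (h : Fin (m + 1) → α → ℝ) (k : Fin (m + 1))
    (hF : ∀ θ x, F (Function.update θ k x) = F θ) (hk : ∫ x, h k x ∂μ = 0) :
    ∫ θ, F θ * ∏ j, h j (θ j) ∂(Measure.pi fun _ => μ) = 0 := by
  obtain ⟨x₀⟩ := ‹Nonempty α›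
  rw [← (measurePreserving_piFinSuccAbove (fun _ => μ) k).symm.integral_comp']
  simp_rw [MeasurableEquiv.piFinSuccAbove_symm_apply, Fin.insertNthEquiv, Equiv.coe_fn_mk,
    Fin.prod_univ_succAbove _ k, Fin.insertNth_apply_same, Fin.insertNth_apply_succAbove]
  calc _ = ∫ z, h k z.1 * (F (k.insertNth x₀ z.2) * ∏ j, h (k.succAbove j) (z.2 j))
          ∂μ.prod (Measure.pi fun _ => μ) := by
        congr with z
        have hFz := hF (k.insertNth x₀ z.2) z.1
        rw [Fin.update_insertNth] at hFz
        rw [hFz]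
        ring
    _ = 0 := by
        rw [integral_prod_mul (h k) fun y => F (k.insertNth x₀ y) *
          ∏ j, h (k.succAbove j) (y j), hk, zero_mul]

end ProductMeasure

namespace Circle2pi

def rep (t : Circle2pi) : ℝ := AddCircle.equivIco (2 * π) 0 t

lemma rep_mem_Ico (t : Circle2pi) : rep t ∈ Set.Ico 0 (2 * π) := by
  simpa [rep] using (AddCircle.equivIco (2 * π) 0 t).2

lemma coe_rep (t : Circle2pi) : (rep t : Circle2pi) = t :=
  (AddCircle.equivIco (2 * π) 0).symm_apply_apply t

lemma rep_coe {x : ℝ} (hx : x ∈ Set.Ico 0 (2 * π)) : rep x = x := by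
  rw [rep, AddCircle.equivIco_coe_eq (by simpa using hx)]

lemma rep_pos {t : Circle2pi} (ht : t ≠ 0) : 0 < rep t := by
  refine (rep_mem_Ico t).1.lt_of_ne fun h => ht ?_
  rw [← coe_rep t, ← h, AddCircle.coe_zero]

lemma rep_sub (s t : Circle2pi) :
    rep (s - t) = if rep t ≤ rep s then rep s - rep t else rep s - rep t + 2 * π := by
  obtain ⟨hs₀, hs₁⟩ := rep_mem_Ico s
  obtain ⟨ht₀, ht₁⟩ := rep_mem_Ico t
  conv_lhs => rw [← coe_rep s, ← coe_rep t, ← AddCircle.coe_sub]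
  split_ifs with h
  · exact rep_coe ⟨by linarith, by linarith⟩
  · rw [← AddCircle.coe_add_period]
    exact rep_coe ⟨by linarith, by linarith⟩

lemma rep_neg {t : Circle2pi} (ht : t ≠ 0) : rep (-t) = 2 * π - rep t := by
  have h₀ : rep 0 = 0 := by simpa using rep_coe ⟨le_rfl, two_pi_pos⟩
  have h := rep_sub 0 t
  rw [zero_sub, h₀, if_neg (rep_pos ht).not_ge] at h
  linarith

lemma equivIoc_eq_rep {t : Circle2pi} (ht : t ≠ 0) :
    (AddCircle.equivIoc (2 * π) 0 t : ℝ) = rep t := by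
  conv_lhs => rw [← coe_rep t]
  rw [AddCircle.equivIoc_coe_eq]
  exact ⟨rep_pos ht, by simpa using (rep_mem_Ico t).2.le⟩

lemma sbtw_iff_rep_sub_lt {a b c : Circle2pi} (hab : a ≠ b) (hca : c ≠ a) :
    sbtw a b c ↔ rep (b - a) < rep (c - a) := by
  have hba : b - a ≠ 0 := sub_ne_zero.2 hab.symm
  have hca' : c - a ≠ 0 := sub_ne_zero.2 hca
  have hbtw (x y z : Circle2pi) :
      btw x y z ↔ rep (y - x) ≤ AddCircle.equivIoc (2 * π) 0 (z - x) := Iff.rfl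
  rw [sbtw_iff_btw_not_btw, hbtw, hbtw, equivIoc_eq_rep hca', ← neg_sub c a,
    equivIoc_eq_rep (neg_ne_zero.2 hca'), rep_neg hca', ← sub_sub_sub_cancel_right b c a,
    rep_sub (b - a) (c - a)]
  have := rep_pos hba
  have := (rep_mem_Ico (b - a)).2
  split_ifs <;> constructor <;> intro h <;> grind

def sawtooth (t : Circle2pi) : ℝ := 1 - rep t / π

lemma eCocycle_eq_sawtooth_add {a b c : Circle2pi} (hab : a ≠ b) (hbc : b ≠ c) (hca : c ≠ a) :
    eCocycle a b c = sawtooth (b - a) + sawtooth (c - b) + sawtooth (a - c) := by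
  have hrep : rep (b - a) ≠ rep (c - a) := fun h => hbc <| by
    simpa [coe_rep] using congrArg ((↑) : ℝ → Circle2pi) h
  rw [eCocycle, sbtw_iff_rep_sub_lt hab hca, ← sub_sub_sub_cancel_right c b a, ← neg_sub c a,
    sawtooth, sawtooth, sawtooth, rep_neg (sub_ne_zero.2 hca), rep_sub (c - a) (b - a)]
  have := pi_pos
  split_ifs <;> field_simp <;> grind

lemma eCocycle_eq_sum_sawtooth {x : Fin 3 → Circle2pi} (hx : Function.Injective x) :
    eCocycle (x 0) (x 1) (x 2) = ∑ j, sawtooth (x (j + 1) - x j) := by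
  rw [Fin.sum_univ_three, eCocycle_eq_sawtooth_add (hx.ne (by decide)) (hx.ne (by decide))
    (hx.ne (by decide))]
  rfl

lemma measurable_rep : Measurable rep :=
  measurable_subtype_coe.comp (AddCircle.measurableEquivIco (2 * π) 0).measurable

lemma measurable_sawtooth : Measurable sawtooth :=
  measurable_const.sub (measurable_rep.div_const π)

lemma abs_sawtooth_le_one (t : Circle2pi) : |sawtooth t| ≤ 1 := by
  obtain ⟨h₀, h₁⟩ := rep_mem_Ico t
  have := pi_pos
  rw [abs_le, sawtooth, div_eq_mul_inv]
  constructor <;> nlinarith [inv_pos.2 this, mul_inv_cancel₀ this.ne']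

end Circle2pi

instance : NullSingletonClass circleMeasure := by
  refine ⟨fun x => ?_⟩
  have h := AddCircle.volume_closedBall (2 * π) (x := x) 0
  rw [Metric.closedBall_zero, mul_zero, min_eq_right two_pi_pos.le, ENNReal.ofReal_zero,
    AddCircle.volume_eq_smul_haarAddCircle, Measure.smul_apply, smul_eq_mul] at h
  exact (mul_eq_zero.1 h).resolve_left (ENNReal.ofReal_pos.2 two_pi_pos).ne'

open Circle2pi

section Cocycle

variable {n : ℕ}

def eulerVertex (i : Fin n) (j : Fin 3) : Fin (2 * n + 1) := ⟨2 * i + j, by omega⟩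

lemma eulerVertex_injective (i : Fin n) : Function.Injective (eulerVertex i) :=
  fun j j' h => Fin.ext (by simpa [eulerVertex] using congrArg Fin.val h)

def sawtoothProd {N : ℕ} (u w : Fin n → Fin N) (θ : Fin N → Torus n) : ℝ :=
  ∏ i, sawtooth (θ (u i) i - θ (w i) i)

lemma measurable_sawtoothProd {N : ℕ} (u w : Fin n → Fin N) : Measurable (sawtoothProd u w) :=
  Finset.measurable_prod _ fun i _ => measurable_sawtooth.comp (by fun_prop)

lemma abs_sawtoothProd_le_one {N : ℕ} (u w : Fin n → Fin N) (θ : Fin N → Torus n) :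
    |sawtoothProd u w θ| ≤ 1 := by
  rw [sawtoothProd, Finset.abs_prod]
  exact Finset.prod_le_one (fun _ _ => abs_nonneg _) fun _ _ => abs_sawtooth_le_one _

lemma Ccocycle_eq_sum_sawtoothProd (θ : Fin (2 * n + 1) → Torus n)
    (hθ : ∀ i, Function.Injective fun p => θ p i) :
    Ccocycle n θ = ∑ σ : Equiv.Perm (Fin (2 * n + 1)), ∑ t : Fin n → Fin 3,
      ((Equiv.Perm.sign σ : ℤ) / (2 * n + 1).factorial : ℝ) *
        sawtoothProd (fun i => σ (eulerVertex i (t i + 1))) (fun i => σ (eulerVertex i (t i)))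
          θ := by
  rw [Ccocycle, Finset.mul_sum]
  refine Finset.sum_congr rfl fun σ _ => ?_
  simp only [sawtoothProd, ← Finset.mul_sum]
  rw [← Fintype.prod_sum fun i j =>
      sawtooth (θ (σ (eulerVertex i (j + 1))) i - θ (σ (eulerVertex i j)) i),
    ← mul_assoc, one_div_mul_eq_div]
  congr 1
  refine Finset.prod_congr rfl fun i _ => ?_
  exact eCocycle_eq_sum_sawtooth ((hθ i).comp (σ.injective.comp (eulerVertex_injective i)))

lemma exists_forall_ne_of_two_mul_lt {N : ℕ} (u w : Fin n → Fin N) (h : 2 * n < N) :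
    ∃ k, ∀ i, u i ≠ k ∧ w i ≠ k := by
  have hcard : (Finset.univ.image u ∪ Finset.univ.image w).card < Fintype.card (Fin N) :=
    calc _ ≤ (Finset.univ.image u).card + (Finset.univ.image w).card := Finset.card_union_le _ _
      _ ≤ n + n := add_le_add (Finset.card_image_le.trans (by simp))
          (Finset.card_image_le.trans (by simp))
      _ < _ := by simpa [two_mul] using h
  obtain ⟨k, -, hk⟩ := Finset.exists_mem_notMem_of_card_lt_card hcard
  exact ⟨k, fun i => ⟨fun hu => hk (by simp [← hu]), fun hw => hk (by simp [← hw])⟩⟩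

lemma integral_sawtoothProd_mul_prod_eq_zero {m : ℕ} (h : Fin (m + 1) → Torus n → ℝ)
    (hh : ∀ k, ∫ x, h k x ∂(torusMeasure n) = 0) (u w : Fin n → Fin (m + 1))
    (hnm : 2 * n < m + 1) :
    ∫ θ, sawtoothProd u w θ * ∏ k, h k (θ k)
      ∂(Measure.pi fun _ => torusMeasure n) = 0 := by
  obtain ⟨k, hk⟩ := exists_forall_ne_of_two_mul_lt u w hnm
  refine integral_mul_prod_eq_zero_of_update_eq _ h k (fun θ x => ?_) (hh k)
  simp only [sawtoothProd, Function.update_of_ne (hk _).1,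
    Function.update_of_ne (hk _).2]

theorem integral_Ccocycle_mul_prod_eq_zero (h : Fin (2 * n + 1) → Torus n → ℝ)
    (hint : ∀ k, Integrable (h k) (torusMeasure n))
    (hmean : ∀ k, ∫ x, h k x ∂(torusMeasure n) = 0) :
    ∫ θ, Ccocycle n θ * ∏ k, h k (θ k) ∂(Measure.pi fun _ => torusMeasure n) = 0 := by
  have hH := Integrable.fintype_prod (μ := fun _ => torusMeasure n) hint
  have hterm (u w : Fin n → Fin (2 * n + 1)) :
      Integrable (fun θ => sawtoothProd u w θ * ∏ k, h k (θ k))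
        (Measure.pi fun _ => torusMeasure n) :=
    hH.bdd_mul (measurable_sawtoothProd u w).aestronglyMeasurable
      (ae_of_all _ fun θ => abs_sawtoothProd_le_one u w θ)
  calc _ = ∫ θ, ∑ σ : Equiv.Perm (Fin (2 * n + 1)), ∑ t : Fin n → Fin 3,
          ((Equiv.Perm.sign σ : ℤ) / (2 * n + 1).factorial : ℝ) *
            (sawtoothProd (fun i => σ (eulerVertex i (t i + 1)))
              (fun i => σ (eulerVertex i (t i))) θ * ∏ k, h k (θ k))
          ∂(Measure.pi fun _ => torusMeasure n) := by
        refine integral_congr_ae ?_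
        filter_upwards [ae_injective_apply] with θ hθ
        simp only [Ccocycle_eq_sum_sawtoothProd θ hθ, Finset.sum_mul, mul_assoc]
    _ = 0 := by
        rw [integral_finsetSum _ fun σ _ =>
          integrable_finsetSum _ fun t _ => (hterm _ _).const_mul _]
        refine Finset.sum_eq_zero fun σ _ => ?_
        rw [integral_finsetSum _ fun t _ => (hterm _ _).const_mul _]
        refine Finset.sum_eq_zero fun t _ => ?_
        rw [integral_const_mul, integral_sawtoothProd_mul_prod_eq_zero h hmean _ _ (by omega),
          mul_zero]

end Cocycle

theorem integral_Ccocycle_basepoint_reduction_general (n : ℕ)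
    (φ : Torus n → ℝ) (f : Fin (2 * n) → Torus n → ℝ)
    (hφ : MemLp φ 2 (torusMeasure n)) (hf : ∀ j, MemLp (f j) 2 (torusMeasure n))
    (hφ1 : ∫ θ, φ θ ^ 2 ∂(torusMeasure n) = 1)
    (horth : ∀ j, ∫ θ, φ θ * f j θ ∂(torusMeasure n) = 0) :
    ∫ θ : Fin (2 * n + 1) → Torus n,
        Ccocycle n θ *
          ((φ (θ 0) ^ 2 - 1) * ∏ j : Fin (2 * n), φ (θ j.succ) * f j (θ j.succ))
      ∂(Measure.pi fun _ => torusMeasure n) = 0 := by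
  let h : Fin (2 * n + 1) → Torus n → ℝ :=
    Fin.cons (fun x => φ x ^ 2 - 1) fun j x => φ x * f j x
  have hint : ∀ k, Integrable (h k) (torusMeasure n) :=
    Fin.cases (hφ.integrable_sq.sub (integrable_const 1)) fun j => hφ.integrable_mul (hf j)
  have hmean : ∀ k, ∫ x, h k x ∂(torusMeasure n) = 0 :=
    Fin.cases (by simp [h, integral_sub hφ.integrable_sq (integrable_const 1), hφ1]) horth
  simpa [h, Fin.prod_univ_succ] using integral_Ccocycle_mul_prod_eq_zero h hint hmean

/-- reduction to the basepoint `𝟙`. -/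
theorem integral_Ccocycle_basepoint_reduction (n : ℕ) (hn : 1 ≤ n)
    (φ : Torus n → ℝ) (f : Fin (2 * n) → Torus n → ℝ)
    (hφ : MemLp φ 2 (torusMeasure n)) (hf : ∀ j, MemLp (f j) 2 (torusMeasure n))
    (hφ1 : ∫ θ, φ θ ^ 2 ∂(torusMeasure n) = 1)
    (horth : ∀ j, ∫ θ, φ θ * f j θ ∂(torusMeasure n) = 0) :
    ∫ θ : Fin (2 * n + 1) → Torus n,
        Ccocycle n θ *
          ((φ (θ 0) ^ 2 - 1) * ∏ j : Fin (2 * n), φ (θ j.succ) * f j (θ j.succ))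
      ∂(Measure.pi fun _ => torusMeasure n) = 0 :=
  integral_Ccocycle_basepoint_reduction_general n φ f hφ hf hφ1 horth
end
end

section
/- Let k and l be positive integers. Then ∫_{(S¹)³} e(θ₀,θ₁,θ₂) cos(kθ₁) cos(lθ₂) dθ₀dθ₁dθ₂ = 0 and ∫_{(S¹)³} e(θ₀,θ₁,θ₂) sin(kθ₁) sin(lθ₂) dθ₀dθ₁dθ₂ = 0; moreover, if k ≠ l, then also ∫_{(S¹)³} e(θ₀,θ₁,θ₂) cos(kθ₁) sin(lθ₂) dθ₀dθ₁dθ₂ = 0. -/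
open MeasureTheory Real
open scoped Real

noncomputable section

/-!
The cocycle `e` is invariant under the diagonal rotation `θᵢ ↦ θᵢ + t`, and it changes sign under
the reflection `θᵢ ↦ -θᵢ` off the null set where two of the `θᵢ` coincide. Hence `e` integrates to
zero against every `F(θ₁, θ₂)` that is even under the reflection, such as `cos kθ₁ cos lθ₂` and
`sin kθ₁ sin lθ₂`, and against every `F` that changes sign under some diagonal rotation, such as
`sin (kθ₁ ± lθ₂)` under the rotation by `π / (k ± l)`, provided `k ± l ≠ 0`. The mixed case
follows from `cos kθ₁ sin lθ₂ = (sin (kθ₁ + lθ₂) - sin (kθ₁ - lθ₂)) / 2`.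
-/

open MeasureTheory

theorem sbtw_iff_btw_of_ne {α : Type*} [CircularOrder α] {a b c : α} (hab : a ≠ b) (hbc : b ≠ c)
    (hca : c ≠ a) : sbtw a b c ↔ btw a b c :=
  ⟨btw_of_sbtw, fun h => h.sbtw_of_not_btw fun h' => by
    rcases h.antisymm h' with h | h | h <;> contradiction⟩

namespace QuotientAddGroup

variable {α : Type*} [AddCommGroup α] [LinearOrder α] [IsOrderedAddMonoid α] [Archimedean α]
  {p : α} [Fact (0 < p)]

theorem btw_add_right (a b c t : α ⧸ AddSubgroup.zmultiples p) :
    btw (a + t) (b + t) (c + t) ↔ btw a b c := by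
  simp only [btw, add_sub_add_right_eq_sub]

theorem btw_neg (a b c : α ⧸ AddSubgroup.zmultiples p) : btw (-a) (-b) (-c) ↔ btw c b a := by
  rw [btw_cyclic (a := c)]
  obtain ⟨x, rfl⟩ := mk_surjective a
  obtain ⟨y, rfl⟩ := mk_surjective b
  obtain ⟨z, rfl⟩ := mk_surjective c
  rw [← mk_neg, ← mk_neg, ← mk_neg, btw_coe_iff', btw_coe_iff', neg_sub_neg, neg_sub_neg,
    ← neg_sub y x, ← neg_sub z x, toIcoMod_neg, toIocMod_neg, neg_zero, sub_le_sub_iff_left]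

theorem sbtw_add_right (a b c t : α ⧸ AddSubgroup.zmultiples p) :
    sbtw (a + t) (b + t) (c + t) ↔ sbtw a b c := by
  simp only [sbtw_iff_not_btw, btw_add_right]

theorem sbtw_neg (a b c : α ⧸ AddSubgroup.zmultiples p) : sbtw (-a) (-b) (-c) ↔ sbtw c b a := by
  simp only [sbtw_iff_not_btw, btw_neg]

end QuotientAddGroup

theorem AddCircle.measurableSet_btw (T : ℝ) [Fact (0 < T)] :
    MeasurableSet {q : AddCircle T × AddCircle T × AddCircle T | btw q.1 q.2.1 q.2.2} := by
  have hIco : Measurable fun x : AddCircle T => (AddCircle.equivIco T 0 x : ℝ) :=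
    measurable_subtype_coe.comp (AddCircle.measurableEquivIco T 0).measurable
  have hIoc : Measurable fun x : AddCircle T => (AddCircle.equivIoc T 0 x : ℝ) :=
    measurable_subtype_coe.comp (AddCircle.measurableEquivIoc T 0).measurable
  exact measurableSet_le (hIco.comp (by fun_prop)) (hIoc.comp (by fun_prop))

theorem eCocycle_add_right (a b c t : Circle2pi) :
    eCocycle (a + t) (b + t) (c + t) = eCocycle a b c := by
  unfold eCocycle
  rw [QuotientAddGroup.sbtw_add_right]

theorem eCocycle_neg {a b c : Circle2pi} (hab : a ≠ b) (hbc : b ≠ c) (hca : c ≠ a) :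
    eCocycle (-a) (-b) (-c) = -eCocycle a b c := by
  have h : sbtw (-a) (-b) (-c) ↔ ¬sbtw a b c := by
    rw [QuotientAddGroup.sbtw_neg, sbtw_iff_not_btw, sbtw_iff_btw_of_ne hab hbc hca]
  by_cases habc : sbtw a b c <;> simp [eCocycle, h, habc]

theorem abs_eCocycle (a b c : Circle2pi) : |eCocycle a b c| = 1 := by
  unfold eCocycle; split <;> simp

theorem measurable_eCocycle :
    Measurable fun q : Circle2pi × Circle2pi × Circle2pi => eCocycle q.1 q.2.1 q.2.2 := by
  have hs : MeasurableSet {q : Circle2pi × Circle2pi × Circle2pi | sbtw q.1 q.2.1 q.2.2} := by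
    simp only [sbtw_iff_not_btw]
    exact (AddCircle.measurableSet_btw _).compl.preimage (by fun_prop :
      Measurable fun q : Circle2pi × Circle2pi × Circle2pi => (q.2.2, q.2.1, q.1))
  exact Measurable.ite hs measurable_const measurable_const

-- Makes `circleMeasure` atomless, through `IsAddHaarMeasure.nullSingletonClass`.
instance AddCircle.instNontrivial {𝕜 : Type*} [Field 𝕜] [LinearOrder 𝕜] [IsStrictOrderedRing 𝕜]
    (p : 𝕜) [Fact (0 < p)] : Nontrivial (AddCircle p) := by
  refine ⟨⟨((p / 2 : 𝕜) : AddCircle p), 0, fun h => ?_⟩⟩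
  have h2 := AddCircle.addOrderOf_period_div (p := p) (n := 2) two_pos
  rw [Nat.cast_ofNat, h, addOrderOf_zero] at h2
  exact absurd h2 (by norm_num)

theorem MeasureTheory.Measure.ae_pairwise_ne_prod_prod {α : Type*} [MeasurableSpace α]
    [MeasurableEq α] (μ : Measure α) [SFinite μ] [NullSingletonClass μ] :
    ∀ᵐ q ∂μ.prod (μ.prod μ), q.1 ≠ q.2.1 ∧ q.2.1 ≠ q.2.2 ∧ q.2.2 ≠ q.1 := by
  have hs : MeasurableSet {q : α × α × α | q.1 ≠ q.2.1 ∧ q.2.1 ≠ q.2.2 ∧ q.2.2 ≠ q.1} := by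
    measurability
  refine (Measure.ae_prod_iff_ae_ae hs).2 (ae_of_all _ fun a =>
    (Measure.ae_prod_iff_ae_ae (hs.preimage measurable_prodMk_left)).2 ?_)
  filter_upwards [compl_mem_ae_iff.2 (measure_singleton a)] with b hb
  filter_upwards [compl_mem_ae_iff.2 (measure_singleton a),
    compl_mem_ae_iff.2 (measure_singleton b)] with c hca hcb
  exact ⟨Ne.symm hb, Ne.symm hcb, hca⟩

theorem MeasureTheory.Measure.isNegInvariant_prod {G H : Type*} [MeasurableSpace G]
    [MeasurableSpace H] [Neg G] [Neg H] [MeasurableNeg G] [MeasurableNeg H] (μ : Measure G)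
    (ν : Measure H) [μ.IsNegInvariant] [ν.IsNegInvariant] [SFinite μ] [SFinite ν] :
    (μ.prod ν).IsNegInvariant := by
  constructor
  change Measure.map (Prod.map Neg.neg Neg.neg) (μ.prod ν) = μ.prod ν
  rw [← Measure.map_prod_map _ _ measurable_neg measurable_neg, Measure.map_neg_eq_self,
    Measure.map_neg_eq_self]

local notation "ν₃" => circleMeasure.prod (circleMeasure.prod circleMeasure)

def eulerPairing (F : Circle2pi → Circle2pi → ℝ) : ℝ :=
  ∫ q, eCocycle q.1 q.2.1 q.2.2 * F q.2.1 q.2.2 ∂ν₃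

theorem integrable_eCocycle_mul {F : Circle2pi → Circle2pi → ℝ}
    (hF : Continuous (Function.uncurry F)) :
    Integrable (fun q : Circle2pi × Circle2pi × Circle2pi =>
      eCocycle q.1 q.2.1 q.2.2 * F q.2.1 q.2.2) ν₃ :=
  ((hF.comp (by fun_prop)).integrable_of_hasCompactSupport
    (HasCompactSupport.of_compactSpace _)).bdd_mul measurable_eCocycle.aestronglyMeasurable
    (ae_of_all _ fun q => (abs_eCocycle q.1 q.2.1 q.2.2).le)

theorem eulerPairing_sub {F G : Circle2pi → Circle2pi → ℝ} (hF : Continuous (Function.uncurry F))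
    (hG : Continuous (Function.uncurry G)) :
    eulerPairing (fun a b => F a b - G a b) = eulerPairing F - eulerPairing G := by
  simp only [eulerPairing, mul_sub]
  exact integral_sub (integrable_eCocycle_mul hF) (integrable_eCocycle_mul hG)

theorem eulerPairing_div_const (F : Circle2pi → Circle2pi → ℝ) (c : ℝ) :
    eulerPairing (fun a b => F a b / c) = eulerPairing F / c := by
  simp only [eulerPairing, mul_div_assoc', integral_div]

theorem eulerPairing_comp_add_right (F : Circle2pi → Circle2pi → ℝ) (t : Circle2pi) :
    eulerPairing (fun a b => F (a + t) (b + t)) = eulerPairing F := by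
  -- Instance search gives up on the triple product, here and in `eulerPairing_comp_neg`.
  have : (ν₃).IsAddRightInvariant := Measure.prod.instIsAddRightInvariant
  have h := integral_add_right_eq_self (μ := ν₃)
    (fun q => eCocycle q.1 q.2.1 q.2.2 * F q.2.1 q.2.2) (t, t, t)
  simp only [Prod.fst_add, Prod.snd_add, eCocycle_add_right] at h
  exact h

theorem eulerPairing_comp_neg (F : Circle2pi → Circle2pi → ℝ) :
    eulerPairing (fun a b => F (-a) (-b)) = -eulerPairing F := by
  have := Measure.isNegInvariant_prod circleMeasure circleMeasure
  have := Measure.isNegInvariant_prod circleMeasure (circleMeasure.prod circleMeasure)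
  rw [eulerPairing, eulerPairing, ← integral_neg_eq_self _ ν₃, ← integral_neg]
  refine integral_congr_ae ?_
  filter_upwards [Measure.ae_pairwise_ne_prod_prod circleMeasure] with q ⟨h₁, h₂, h₃⟩
  simp only [Prod.fst_neg, Prod.snd_neg, neg_neg, eCocycle_neg h₁ h₂ h₃]
  ring

theorem eulerPairing_eq_zero_of_even {F : Circle2pi → Circle2pi → ℝ}
    (hF : ∀ a b, F (-a) (-b) = F a b) : eulerPairing F = 0 := by
  have h := eulerPairing_comp_neg F
  simp only [hF] at h
  linarith

theorem eulerPairing_eq_zero_of_antiperiodic {F : Circle2pi → Circle2pi → ℝ} (t : Circle2pi)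
    (hF : ∀ a b, F (a + t) (b + t) = -F a b) : eulerPairing F = 0 := by
  have h := eulerPairing_comp_add_right F t
  simp only [hF, eulerPairing, mul_neg, integral_neg] at h
  rw [eulerPairing]
  linarith

theorem Real.Angle.cos_mul_sin (x y : Real.Angle) :
    cos x * sin y = (sin (x + y) - sin (x + -y)) / 2 := by
  rw [sin_add, sin_add, cos_neg, sin_neg]
  ring

theorem eulerPairing_sin_zsmul_add_zsmul_eq_zero {k l : ℤ} (hkl : k + l ≠ 0) :
    eulerPairing (fun a b => Real.Angle.sin (k • a + l • b)) = 0 := by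
  set t : Circle2pi := ((π / (k + l) : ℝ) : Circle2pi)
  have ht : (k + l) • t = ((π : ℝ) : Circle2pi) := by
    rw [← AddCircle.coe_zsmul, zsmul_eq_mul, Int.cast_add,
      mul_div_cancel₀ _ (by exact_mod_cast hkl)]
  refine eulerPairing_eq_zero_of_antiperiodic t fun a b => ?_
  rw [smul_add, smul_add, add_add_add_comm, ← add_smul, ht]
  exact Real.Angle.sin_add_pi _

theorem eulerPairing_cos_mul_sin (k l : ℤ) :
    eulerPairing (fun a b => Real.Angle.cos (k • a) * Real.Angle.sin (l • b)) =
      (eulerPairing (fun a b => Real.Angle.sin (k • a + l • b)) -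
        eulerPairing (fun a b => Real.Angle.sin (k • a + (-l) • b))) / 2 := by
  have h : (fun a b : Circle2pi => Real.Angle.cos (k • a) * Real.Angle.sin (l • b)) =
      fun a b : Circle2pi =>
        (Real.Angle.sin (k • a + l • b) - Real.Angle.sin (k • a + (-l) • b)) / 2 := by
    funext a b
    simp only [neg_smul]
    exact Real.Angle.cos_mul_sin (k • a) (l • b)
  rw [h, eulerPairing_div_const, eulerPairing_sub] <;>
    exact Real.Angle.continuous_sin.comp (by fun_prop)

/-- orthogonality relations of `e` against trigonometric functions. -/
theorem euler_trig_orthogonality (k l : ℤ) (hk : 0 < k) (hl : 0 < l) :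
    (∫ p : Circle2pi × Circle2pi × Circle2pi,
        eCocycle p.1 p.2.1 p.2.2 * Real.Angle.cos (k • p.2.1) * Real.Angle.cos (l • p.2.2)
      ∂(circleMeasure.prod (circleMeasure.prod circleMeasure)) = 0) ∧
    (∫ p : Circle2pi × Circle2pi × Circle2pi,
        eCocycle p.1 p.2.1 p.2.2 * Real.Angle.sin (k • p.2.1) * Real.Angle.sin (l • p.2.2)
      ∂(circleMeasure.prod (circleMeasure.prod circleMeasure)) = 0) ∧
    (k ≠ l →
      ∫ p : Circle2pi × Circle2pi × Circle2pi,
          eCocycle p.1 p.2.1 p.2.2 * Real.Angle.cos (k • p.2.1) * Real.Angle.sin (l • p.2.2)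
        ∂(circleMeasure.prod (circleMeasure.prod circleMeasure)) = 0) := by
  simp only [mul_assoc]
  refine ⟨eulerPairing_eq_zero_of_even
      (F := fun a b => Real.Angle.cos (k • a) * Real.Angle.cos (l • b)) fun a b => ?_,
    eulerPairing_eq_zero_of_even
      (F := fun a b => Real.Angle.sin (k • a) * Real.Angle.sin (l • b)) fun a b => ?_,
    fun hkl => ?_⟩
  · rw [smul_neg, smul_neg]
    exact congrArg₂ (· * ·) (Real.Angle.cos_neg _) (Real.Angle.cos_neg _)
  · rw [smul_neg, smul_neg]
    exact (congrArg₂ (· * ·) (Real.Angle.sin_neg _) (Real.Angle.sin_neg _)).trans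
      (neg_mul_neg _ _)
  · have h := eulerPairing_cos_mul_sin k l
    rw [eulerPairing_sin_zsmul_add_zsmul_eq_zero (by omega),
      eulerPairing_sin_zsmul_add_zsmul_eq_zero (by omega), sub_self, zero_div] at h
    exact h
end
end
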